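/- (Coplanarity lemma of Case 7) Let u₀ ∈ ℝ³, u₀ ≠ 0. If (q¹,q²,p¹,p²) ∈ M satisfies q¹×p¹ + q²×p² = 0 and p¹ + p² = u₀, then there exists a 2-dimensional linear subspace Π of ℝ³ containing u₀ such that q¹, q², p¹, p² all belong to Π. -/

import Mathlib

open Matrix

/-- Vectors in ℝ³. -/
abbrev V3 : Type := Fin 3 → ℝ

/-- The two-body phase space M = ℝ³ × ℝ³ × ℝ³ × ℝ³, points (q¹, q², p¹, p²). -/
abbrev M2B : Type := V3 × V3 × V3 × V3

/-- A 3×3 real matrix is special orthogonal. -/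
def SO3 (A : Matrix (Fin 3) (Fin 3) ℝ) : Prop := Aᵀ * A = 1 ∧ A.det = 1

/-- The action of (A, a) ∈ SE(3) on the phase space:
(A,a)·(q¹,q²,p¹,p²) = (Aq¹+a, Aq²+a, Ap¹, Ap²). -/
def act (A : Matrix (Fin 3) (Fin 3) ℝ) (a : V3) (m : M2B) : M2B :=
  (A *ᵥ m.1 + a, A *ᵥ m.2.1 + a, A *ᵥ m.2.2.1, A *ᵥ m.2.2.2)

/-- The isotropy subgroup SE(3)_{(q,p)} of a point of M, as a set of pairs (A,a)
with A special orthogonal. -/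
def isotropy (m : M2B) : Set (Matrix (Fin 3) (Fin 3) ℝ × V3) :=
  {g | SO3 g.1 ∧ act g.1 g.2 m = m}

/-- The momentum map J(q¹,q²,p¹,p²) = (q¹×p¹ + q²×p², p¹+p²). -/
def Jmom (m : M2B) : V3 × V3 :=
  (m.1 ⨯₃ m.2.2.1 + m.2.1 ⨯₃ m.2.2.2, m.2.2.1 + m.2.2.2)

/-- G¹(x) = {(A,a) ∈ SE(3) : a = x − Ax}. -/
def G1 (x : V3) : Set (Matrix (Fin 3) (Fin 3) ℝ × V3) :=
  {g | SO3 g.1 ∧ g.2 = x - g.1 *ᵥ x}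

/-- G²(y) = {(A,0) ∈ SE(3) : Ay = y}. -/
def G2 (y : V3) : Set (Matrix (Fin 3) (Fin 3) ℝ × V3) :=
  {g | SO3 g.1 ∧ g.1 *ᵥ y = y ∧ g.2 = 0}

/-- G³(x,y) = {(A,a) ∈ SE(3) : Ay = y and a = x − Ax}. -/
def G3 (x y : V3) : Set (Matrix (Fin 3) (Fin 3) ℝ × V3) :=
  {g | SO3 g.1 ∧ g.1 *ᵥ y = y ∧ g.2 = x - g.1 *ᵥ x}

/-- G⁴ = {(I, 0)}, the trivial subgroup. -/
def G4 : Set (Matrix (Fin 3) (Fin 3) ℝ × V3) := {((1 : Matrix (Fin 3) (Fin 3) ℝ), (0 : V3))}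

/-!
If `q¹ × p¹ ≠ 0`, the two angular momenta are opposite, so `q¹ × p¹` is normal to all four
vectors. Otherwise each pair `qⁱ, pⁱ` is collinear, so the four vectors lie in the span of two
vectors, which still has a nonzero normal in `ℝ³`. The plane orthogonal to the normal contains
`u₀ = p¹ + p²`.
-/

variable {K : Type*} [Field K]

theorem exists_ne_zero_forall_dotProduct_eq_zero {ι m : Type*} [Fintype ι] [Fintype m]
    (v : ι → m → K) (h : Fintype.card ι < Fintype.card m) :
    ∃ n : m → K, n ≠ 0 ∧ ∀ i, n ⬝ᵥ v i = 0 := by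
  have hker : LinearMap.ker (Matrix.of v).mulVecLin ≠ ⊥ :=
    LinearMap.ker_ne_bot_of_finrank_lt (by simpa using h)
  obtain ⟨n, hn, hn0⟩ := (Submodule.ne_bot_iff _).mp hker
  exact ⟨n, hn0, fun i => by rw [dotProduct_comm]; exact congrFun hn i⟩

theorem finrank_ker_dotProductEquiv {m : ℕ} {n : Fin (m + 1) → K} (hn : n ≠ 0) :
    Module.finrank K (LinearMap.ker (dotProductEquiv K (Fin (m + 1)) n)) = m := by
  have := Module.Dual.finrank_ker_add_one_of_ne_zero
    ((dotProductEquiv K (Fin (m + 1))).map_ne_zero_iff.mpr hn)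
  simpa using this

theorem exists_smul_eq_of_cross_eq_zero {v w : Fin 3 → K} (h : v ⨯₃ w = 0) :
    ∃ z : Fin 3 → K, ∃ a b : K, a • z = v ∧ b • z = w := by
  by_cases hv : v = 0
  · exact ⟨w, 0, 1, by simp [hv], one_smul _ _⟩
  · have hdep : ¬ LinearIndependent K ![v, w] := by
      rw [← crossProduct_ne_zero_iff_linearIndependent, not_not, h]
    rw [LinearIndependent.pair_iff' hv] at hdep
    push Not at hdep
    obtain ⟨c, hc⟩ := hdep
    exact ⟨v, 1, c, one_smul _ _, hc⟩

theorem exists_normal_of_cross_add_cross_eq_zero {q₁ q₂ p₁ p₂ : Fin 3 → K}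
    (h : q₁ ⨯₃ p₁ + q₂ ⨯₃ p₂ = 0) :
    ∃ n : Fin 3 → K, n ≠ 0 ∧ n ⬝ᵥ q₁ = 0 ∧ n ⬝ᵥ q₂ = 0 ∧ n ⬝ᵥ p₁ = 0 ∧ n ⬝ᵥ p₂ = 0 := by
  by_cases h₁ : q₁ ⨯₃ p₁ = 0
  · have h₂ : q₂ ⨯₃ p₂ = 0 := by rwa [h₁, zero_add] at h
    obtain ⟨z₁, a₁, b₁, rfl, rfl⟩ := exists_smul_eq_of_cross_eq_zero h₁
    obtain ⟨z₂, a₂, b₂, rfl, rfl⟩ := exists_smul_eq_of_cross_eq_zero h₂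
    obtain ⟨n, hn, hz⟩ := exists_ne_zero_forall_dotProduct_eq_zero ![z₁, z₂] (by simp)
    have hz₁ : n ⬝ᵥ z₁ = 0 := hz 0
    have hz₂ : n ⬝ᵥ z₂ = 0 := hz 1
    exact ⟨n, hn, by simp [dotProduct_smul, hz₁, hz₂]⟩
  · have hopp : q₁ ⨯₃ p₁ = -(q₂ ⨯₃ p₂) := eq_neg_of_add_eq_zero_left h
    refine ⟨q₁ ⨯₃ p₁, h₁, ?_, ?_, ?_, ?_⟩
    · rw [dotProduct_comm, dot_self_cross]
    · rw [hopp, dotProduct_comm, dotProduct_neg, dot_self_cross, neg_zero]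
    · rw [dotProduct_comm, dot_cross_self]
    · rw [hopp, dotProduct_comm, dotProduct_neg, dot_cross_self, neg_zero]

theorem stmt14 (u0 : V3) (q1 q2 p1 p2 : V3)
    (h1 : q1 ⨯₃ p1 + q2 ⨯₃ p2 = 0) (h2 : p1 + p2 = u0) :
    ∃ P : Submodule ℝ V3, Module.finrank ℝ P = 2 ∧
      u0 ∈ P ∧ q1 ∈ P ∧ q2 ∈ P ∧ p1 ∈ P ∧ p2 ∈ P := by
  obtain ⟨n, hn, hq1, hq2, hp1, hp2⟩ := exists_normal_of_cross_add_cross_eq_zero h1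
  have hp1' : p1 ∈ LinearMap.ker (dotProductEquiv ℝ (Fin 3) n) := hp1
  have hp2' : p2 ∈ LinearMap.ker (dotProductEquiv ℝ (Fin 3) n) := hp2
  exact ⟨_, finrank_ker_dotProductEquiv hn, h2 ▸ add_mem hp1' hp2', hq1, hq2, hp1', hp2'⟩
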